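/- Let U ⊆ ℂ be a nonempty open connected set which is not of the form {z ∈ ℂ : a < Re(e^{−iθ} z) < b} for any θ ∈ ℝ, a ∈ [−∞, ∞), b ∈ (−∞, ∞] (i.e. U is not all of ℂ, not an open half-plane, and not an open infinite strip). Suppose U has at least two distinct symmetry axes with respect to each of which U is Δ-convex. Then there exists a unique point p ∈ ℂ such that p lies on every symmetry axis L of U for which U is L-convex. -/

import Mathlib

/-- The line through the point `p` with (unit) direction `v`. -/
def lineThrough (p v : ℂ) : Set ℂ := {z : ℂ | ∃ t : ℝ, z = p + (t : ℂ) * v}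

/-- Orthogonal reflection over the line through `p` with unit direction `v`:
`z ↦ p + v² ⬝ conj (z - p)`. -/
def reflLine (p v : ℂ) (z : ℂ) : ℂ := p + v ^ 2 * (starRingEnd ℂ) (z - p)

/-- The line through `p` with unit direction `v` is a symmetry axis of `U` with respect to
which `U` is `Δ`-convex: the reflection over the line maps `U` onto `U`, and for each
`z ∈ U` the segment joining `z` to its reflection stays in `U`. -/
def IsConvexSymmAxis (U : Set ℂ) (p v : ℂ) : Prop :=
  ‖v‖ = 1 ∧ reflLine p v '' U = U ∧
  ∀ z ∈ U, ∀ t : ℝ, 0 ≤ t → t ≤ 1 →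
    (t : ℂ) * z + (1 - (t : ℂ)) * reflLine p v z ∈ U

/-!
Reflecting a period `c` of `U` across a symmetry axis gives another period, so `c` minus its
mirror image is a period perpendicular to the axis. If it is nonzero, convexity along the
perpendiculars to the axis makes every such perpendicular through a point of `U` lie in `U`, and
`U` is a strip. Hence, for a domain that is not a strip, every period is parallel to every convex
axis. Two parallel convex axes compose to a period perpendicular to both, so it vanishes and the
axes coincide. Two non-parallel ones compose to a rotation by `u ≠ 1` about their common point `q`;
then there are no periods at all, and since the commutator of that rotation with the reflection
across any further convex axis `L` is the translation by `(u - 1) (σ_L q - q)`, `q` lies on `L`.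
-/

open Complex ComplexConjugate Function Set

lemma Complex.mul_conj_eq_one_of_norm_eq_one {v : ℂ} (hv : ‖v‖ = 1) : v * conj v = 1 := by
  rw [mul_conj', hv]; norm_num

section Reflection

variable {p v : ℂ}

lemma reflLine_reflLine (hv : ‖v‖ = 1) (z : ℂ) : reflLine p v (reflLine p v z) = z := by
  have hv' := mul_conj_eq_one_of_norm_eq_one hv
  simp only [reflLine, map_add, map_sub, map_mul, map_pow, conj_conj]
  linear_combination (z - p) * (v * conj v + 1) * hv'

lemma reflLine_eq_self_iff (hv : ‖v‖ = 1) {z : ℂ} : reflLine p v z = z ↔ z ∈ lineThrough p v := by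
  have hv' := mul_conj_eq_one_of_norm_eq_one hv
  constructor
  · intro h
    have hfix : v ^ 2 * conj (z - p) = z - p := by unfold reflLine at h; linear_combination h
    have hreal : ((conj v * (z - p)).re : ℂ) = conj v * (z - p) := by
      refine conj_eq_iff_re.mp ?_
      simp only [map_mul, conj_conj]
      linear_combination conj v * hfix - v * conj (z - p) * hv'
    refine ⟨(conj v * (z - p)).re, ?_⟩
    rw [hreal]
    linear_combination (p - z) * hv'
  · rintro ⟨t, rfl⟩
    simp only [reflLine, add_sub_cancel_left, map_mul, conj_ofReal]
    linear_combination (t : ℂ) * v * hv'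

lemma reflLine_reflLine_eq_add_mul (p₁ v₁ p₂ v₂ z : ℂ) :
    reflLine p₂ v₂ (reflLine p₁ v₁ z) =
      reflLine p₂ v₂ (reflLine p₁ v₁ 0) + v₂ ^ 2 * conj v₁ ^ 2 * z := by
  simp only [reflLine, map_add, map_sub, map_mul, map_pow, conj_conj, map_zero]
  ring

lemma add_mul_re_add_im_mul_I (hv : ‖v‖ = 1) (z : ℂ) :
    p + v * ((conj v * (z - p)).re + (conj v * (z - p)).im * I) = z := by
  rw [re_add_im]
  linear_combination (z - p) * mul_conj_eq_one_of_norm_eq_one hv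

lemma reflLine_add_mul_add_mul_I (hv : ‖v‖ = 1) (x y : ℝ) :
    reflLine p v (p + v * (x + y * I)) = p + v * (x + (-y : ℝ) * I) := by
  simp only [reflLine, add_sub_cancel_left, map_add, map_mul, conj_ofReal, conj_I]
  push_cast
  linear_combination v * (x - y * I) * mul_conj_eq_one_of_norm_eq_one hv

lemma lineThrough_eq_of_mem {x y : ℂ} (hx : x ∈ lineThrough p v)
    (hy : y ∈ lineThrough p v) (hxy : x ≠ y) : lineThrough p v = lineThrough x (y - x) := by
  obtain ⟨t, rfl⟩ := hx
  obtain ⟨u, rfl⟩ := hy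
  have hut : (u : ℂ) - t ≠ 0 := sub_ne_zero.mpr fun h => hxy (by rw [h])
  ext z
  constructor
  · rintro ⟨r, rfl⟩
    refine ⟨(r - t) / (u - t), ?_⟩
    push_cast
    field_simp
    ring
  · rintro ⟨r, rfl⟩
    exact ⟨t + r * (u - t), by push_cast; ring⟩

end Reflection

lemma rotation_reflLine_rotation_reflLine {u V : ℂ} (hu : ‖u‖ = 1) (hV : ‖V‖ = 1) (P q z : ℂ) :
    q + u * (reflLine P V (q + u * (reflLine P V z - q)) - q) =
      z + (u - 1) * (reflLine P V q - q) := by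
  have hu' := mul_conj_eq_one_of_norm_eq_one hu
  have hV' := mul_conj_eq_one_of_norm_eq_one hV
  simp only [reflLine, map_add, map_sub, map_mul, map_pow, conj_conj]
  linear_combination (V ^ 2 * (conj P - conj q) + V ^ 2 * conj V ^ 2 * (z - P)) * hu' +
    (z - P) * (V * conj V + 1) * hV'

lemma mem_lineThrough_of_rotation {U : Set ℂ} {P V q u : ℂ} (hV : ‖V‖ = 1)
    (hσ : ∀ z, reflLine P V z ∈ U ↔ z ∈ U) (hu : ‖u‖ = 1) (hu1 : u ≠ 1)
    (hρ : ∀ z, q + u * (z - q) ∈ U ↔ z ∈ U) (hper : ∀ c, Periodic (· ∈ U) c → c = 0) :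
    q ∈ lineThrough P V := by
  have hc := hper ((u - 1) * (reflLine P V q - q)) fun z => by
    show (_ ∈ U) = (z ∈ U)
    rw [← rotation_reflLine_rotation_reflLine hu hV, eq_iff_iff, hρ, hσ, hρ, hσ]
  rw [← reflLine_eq_self_iff hV, ← sub_eq_zero]
  exact (mul_eq_zero.mp hc).resolve_left (sub_ne_zero.mpr hu1)

lemma sq_mul_conj_sq_ne_one {v₁ v₂ : ℂ} (hv₁ : ‖v₁‖ = 1) (hsq : v₁ ^ 2 ≠ v₂ ^ 2) :
    v₂ ^ 2 * conj v₁ ^ 2 ≠ 1 := fun h => hsq <| by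
  linear_combination -v₁ ^ 2 * h + v₂ ^ 2 * (v₁ * conj v₁ + 1) * mul_conj_eq_one_of_norm_eq_one hv₁

lemma exists_reflLine_reflLine_eq_rotation {p₁ v₁ p₂ v₂ : ℂ} (hv₁ : ‖v₁‖ = 1)
    (hsq : v₁ ^ 2 ≠ v₂ ^ 2) :
    ∃ q, ∀ z, reflLine p₂ v₂ (reflLine p₁ v₁ z) = q + v₂ ^ 2 * conj v₁ ^ 2 * (z - q) := by
  have hne : 1 - v₂ ^ 2 * conj v₁ ^ 2 ≠ 0 := sub_ne_zero.mpr (sq_mul_conj_sq_ne_one hv₁ hsq).symm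
  refine ⟨reflLine p₂ v₂ (reflLine p₁ v₁ 0) / (1 - v₂ ^ 2 * conj v₁ ^ 2), fun z => ?_⟩
  rw [reflLine_reflLine_eq_add_mul]
  field_simp
  ring

lemma Set.eq_univ_of_periodic_of_abs_le {K : Set ℝ} {s : ℝ} (hs : s ≠ 0)
    (hK : Periodic (· ∈ K) s) (habs : ∀ y ∈ K, ∀ y', |y'| ≤ |y| → y' ∈ K)
    (hne : K.Nonempty) : K = univ := by
  obtain ⟨y, hy⟩ := hne
  refine eq_univ_of_forall fun y' => ?_
  obtain ⟨n, hn⟩ := exists_nat_ge ((|y'| + |y|) / |s|)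
  have hshift : y + n * s ∈ K := (hK.nat_mul n y).mpr hy
  refine habs _ hshift y' ?_
  have hns : |y'| + |y| ≤ n * |s| := (div_le_iff₀ (abs_pos.mpr hs)).mp hn
  have hy_ns : |(n : ℝ) * s| ≤ |y + n * s| + |y| := by
    simpa using abs_add_le (y + n * s) (-y)
  rw [abs_mul, Nat.abs_cast] at hy_ns
  linarith

lemma Real.exists_ereal_eq_of_isOpen_of_ordConnected {S : Set ℝ} (hS : IsOpen S)
    (hS' : S.OrdConnected) (hne : S.Nonempty) :
    ∃ a b : EReal, a ≠ ⊤ ∧ b ≠ ⊥ ∧ S = {x : ℝ | a < x ∧ (x : EReal) < b} := by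
  set T : Set EReal := (↑) '' S
  obtain ⟨x₀, hx₀⟩ := hne
  refine ⟨sInf T, sSup T,
    ne_top_of_le_ne_top (EReal.coe_ne_top x₀) (sInf_le (mem_image_of_mem _ hx₀)),
    ne_bot_of_le_ne_bot (EReal.coe_ne_bot x₀) (le_sSup (mem_image_of_mem _ hx₀)), ?_⟩
  ext x
  constructor
  · intro hx
    obtain ⟨ε, hε, hball⟩ := Metric.isOpen_iff.mp hS x hx
    have hlo : x - ε / 2 ∈ S := hball (by rw [Real.ball_eq_Ioo]; constructor <;> linarith)
    have hhi : x + ε / 2 ∈ S := hball (by rw [Real.ball_eq_Ioo]; constructor <;> linarith)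
    exact ⟨(sInf_le (mem_image_of_mem _ hlo)).trans_lt (EReal.coe_lt_coe_iff.mpr (by linarith)),
      (EReal.coe_lt_coe_iff.mpr (by linarith)).trans_le (le_sSup (mem_image_of_mem _ hhi))⟩
  · rintro ⟨ha, hb⟩
    obtain ⟨_, ⟨y₁, hy₁, rfl⟩, h₁⟩ := sInf_lt_iff.mp ha
    obtain ⟨_, ⟨y₂, hy₂, rfl⟩, h₂⟩ := lt_sSup_iff.mp hb
    exact hS'.out hy₁ hy₂ ⟨(EReal.coe_lt_coe_iff.mp h₁).le, (EReal.coe_lt_coe_iff.mp h₂).le⟩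

-- `a = ⊥` or `b = ⊤` is allowed: half-planes and `ℂ` itself count as strips.
def IsStrip (U : Set ℂ) : Prop :=
  ∃ (θ : ℝ) (a b : EReal), a ≠ ⊤ ∧ b ≠ ⊥ ∧
    U = {z : ℂ | a < ((Complex.exp (-(θ : ℂ) * Complex.I) * z).re : EReal) ∧
      ((Complex.exp (-(θ : ℂ) * Complex.I) * z).re : EReal) < b}

lemma Complex.exp_neg_arg_mul_I_of_norm_eq_one {v : ℂ} (hv : ‖v‖ = 1) :
    exp (-(v.arg : ℂ) * I) = conj v := by
  have h : exp (v.arg * I) = v := by simpa [hv] using norm_mul_exp_arg_mul_I v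
  rw [← h, ← exp_conj, map_mul, conj_ofReal, conj_I, mul_neg, neg_mul, h]

lemma isStrip_of_forall_re_eq {U : Set ℂ} {v : ℂ} (hv : ‖v‖ = 1) (hopen : IsOpen U)
    (hconn : IsConnected U) (hU : ∀ z ∈ U, ∀ w, (conj v * w).re = (conj v * z).re → w ∈ U) :
    IsStrip U := by
  set X : ℂ → ℝ := fun z => (conj v * z).re
  have hv0 : conj v ≠ 0 := by simp [← norm_ne_zero_iff, hv]
  have hXopen : IsOpenMap X := isOpenMap_re.comp (Homeomorph.mulLeft₀ _ hv0).isOpenMap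
  have hXcont : Continuous X := by fun_prop
  obtain ⟨a, b, ha, hb, hS⟩ := Real.exists_ereal_eq_of_isOpen_of_ordConnected (hXopen U hopen)
    (hconn.image X hXcont.continuousOn).isPreconnected.ordConnected (hconn.nonempty.image X)
  refine ⟨v.arg, a, b, ha, hb, ?_⟩
  ext z
  rw [exp_neg_arg_mul_I_of_norm_eq_one hv]
  change z ∈ U ↔ X z ∈ {x : ℝ | a < x ∧ (x : EReal) < b}
  rw [← hS]
  exact ⟨mem_image_of_mem X, fun ⟨w, hw, hwz⟩ => hU w hw z hwz.symm⟩

namespace IsConvexSymmAxis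

variable {U : Set ℂ} {p v p₁ v₁ p₂ v₂ : ℂ}

lemma reflLine_mem_iff (h : IsConvexSymmAxis U p v) {z : ℂ} : reflLine p v z ∈ U ↔ z ∈ U := by
  constructor
  · intro hz
    rw [← h.2.1]
    exact ⟨_, hz, reflLine_reflLine h.1 z⟩
  · intro hz
    rw [← h.2.1]
    exact mem_image_of_mem _ hz

lemma periodic_sq_mul_conj (h : IsConvexSymmAxis U p v) {c : ℂ} (hc : Periodic (· ∈ U) c) :
    Periodic (· ∈ U) (v ^ 2 * conj c) := fun z => by
  have hσ : reflLine p v (reflLine p v z + c) = z + v ^ 2 * conj c := by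
    have hinv := reflLine_reflLine (p := p) h.1 z
    simp only [reflLine, map_add, map_sub, map_mul, map_pow, conj_conj] at hinv ⊢
    linear_combination hinv
  show (z + v ^ 2 * conj c ∈ U) = (z ∈ U)
  rw [← hσ, eq_iff_iff, h.reflLine_mem_iff, ← h.reflLine_mem_iff (z := z)]
  exact eq_iff_iff.mp (hc _)

lemma mem_of_abs_le (h : IsConvexSymmAxis U p v) {x y y' : ℝ} (hy : p + v * (x + y * I) ∈ U)
    (hy' : |y'| ≤ |y|) : p + v * (x + y' * I) ∈ U := by
  rcases eq_or_ne y 0 with rfl | hy0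
  · rw [abs_zero] at hy'
    rwa [abs_nonpos_iff.mp hy']
  · have hratio : |y' / y| ≤ 1 := by
      rwa [abs_div, div_le_one (abs_pos.mpr hy0)]
    obtain ⟨hlo, hhi⟩ := abs_le.mp hratio
    have hseg := h.2.2 _ hy ((y' / y + 1) / 2) (by linarith) (by linarith)
    rw [reflLine_add_mul_add_mul_I h.1] at hseg
    convert hseg using 1
    have hy0' : (y : ℂ) ≠ 0 := by exact_mod_cast hy0
    push_cast
    field_simp
    ring

lemma mem_of_re_eq (h : IsConvexSymmAxis U p v) {c : ℂ} (hc : Periodic (· ∈ U) c) (hc0 : c ≠ 0)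
    (hperp : v ^ 2 * conj c = -c) {z w : ℂ} (hz : z ∈ U)
    (hzw : (conj v * w).re = (conj v * z).re) : w ∈ U := by
  have hv := mul_conj_eq_one_of_norm_eq_one h.1
  set x := (conj v * (z - p)).re
  set s := (conj v * c).im
  have hcs : v * (s * I) = c := by
    have hneg : conj (conj v * c) = -(conj v * c) := by
      simp only [map_mul, conj_conj]
      linear_combination conj v * hperp - v * conj c * hv
    have hre : (conj v * c).re = 0 := by
      have := congrArg re hneg
      rw [conj_re, neg_re] at this
      linarith
    calc v * (s * I) = v * (conj v * c) := by rw [← re_add_im (conj v * c), hre]; simp [s]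
      _ = c := by linear_combination c * hv
  have hs : s ≠ 0 := by
    intro hs0
    rw [hs0] at hcs
    simp [eq_comm, hc0] at hcs
  have hK : {y : ℝ | p + v * (x + y * I) ∈ U} = univ := by
    refine eq_univ_of_periodic_of_abs_le hs (fun y => ?_)
      (fun y hy y' hy' => h.mem_of_abs_le hy hy')
      ⟨(conj v * (z - p)).im, by rwa [mem_ofPred_eq, add_mul_re_add_im_mul_I h.1]⟩
    have hshift : p + v * (x + ((y + s : ℝ) : ℂ) * I) = p + v * (x + y * I) + c := by
      rw [← hcs]; push_cast; ring
    exact (congrArg (· ∈ U) hshift).trans (hc _)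
  have hw := hK ▸ mem_univ (conj v * (w - p)).im
  have hx : x = (conj v * (w - p)).re := by simp only [x, mul_sub, sub_re, hzw]
  rwa [mem_ofPred_eq, hx, add_mul_re_add_im_mul_I h.1] at hw

lemma sq_mul_conj_eq_of_periodic (h : IsConvexSymmAxis U p v) (hopen : IsOpen U)
    (hconn : IsConnected U) (hU : ¬ IsStrip U) {c : ℂ} (hc : Periodic (· ∈ U) c) :
    v ^ 2 * conj c = c := by
  by_contra hne
  have hv := mul_conj_eq_one_of_norm_eq_one h.1
  have hperp : v ^ 2 * conj (c - v ^ 2 * conj c) = -(c - v ^ 2 * conj c) := by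
    simp only [map_sub, map_mul, map_pow, conj_conj]
    linear_combination (-c) * (v * conj v + 1) * hv
  exact hU <| isStrip_of_forall_re_eq h.1 hopen hconn fun z hz w hw =>
    h.mem_of_re_eq (hc.sub_period (h.periodic_sq_mul_conj hc)) (sub_ne_zero.mpr (Ne.symm hne))
      hperp hz hw

lemma lineThrough_eq_of_sq_eq (h₁ : IsConvexSymmAxis U p₁ v₁) (h₂ : IsConvexSymmAxis U p₂ v₂)
    (hopen : IsOpen U) (hconn : IsConnected U) (hU : ¬ IsStrip U) (hsq : v₁ ^ 2 = v₂ ^ 2) :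
    lineThrough p₁ v₁ = lineThrough p₂ v₂ := by
  have hv₁ := mul_conj_eq_one_of_norm_eq_one h₁.1
  set c := reflLine p₂ v₂ (reflLine p₁ v₁ 0)
  have htrans : ∀ z, reflLine p₂ v₂ (reflLine p₁ v₁ z) = z + c := fun z => by
    rw [reflLine_reflLine_eq_add_mul, ← hsq]
    linear_combination z * (v₁ * conj v₁ + 1) * hv₁
  have hperp : v₁ ^ 2 * conj c = -c := by
    simp only [c, reflLine, map_add, map_sub, map_mul, map_pow, conj_conj, map_zero, ← hsq]
    linear_combination -(p₂ + v₁ ^ 2 * conj p₁) * (v₁ * conj v₁ + 1) * hv₁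
  have hc : Periodic (· ∈ U) c := fun z => by
    show (z + c ∈ U) = (z ∈ U)
    rw [← htrans, eq_iff_iff, h₂.reflLine_mem_iff, h₁.reflLine_mem_iff]
  have hc0 : c = 0 := by
    linear_combination (hperp - h₁.sq_mul_conj_eq_of_periodic hopen hconn hU hc) / 2
  have hσ : ∀ z, reflLine p₂ v₂ z = reflLine p₁ v₁ z := fun z => by
    simpa [reflLine_reflLine h₁.1, hc0] using htrans (reflLine p₁ v₁ z)
  ext z
  rw [← reflLine_eq_self_iff h₁.1, ← reflLine_eq_self_iff h₂.1, hσ]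

end IsConvexSymmAxis

theorem convex_symmetry_axes_concurrent_general (U : Set ℂ)
    (hopen : IsOpen U) (hconn : IsConnected U)
    (hnotstrip : ¬ ∃ (θ : ℝ) (a b : EReal), a ≠ ⊤ ∧ b ≠ ⊥ ∧
      U = {z : ℂ | a < ((Complex.exp (-(θ : ℂ) * Complex.I) * z).re : EReal) ∧
        ((Complex.exp (-(θ : ℂ) * Complex.I) * z).re : EReal) < b})
    (p₁ v₁ p₂ v₂ : ℂ)
    (h₁ : IsConvexSymmAxis U p₁ v₁) (h₂ : IsConvexSymmAxis U p₂ v₂)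
    (hdist : lineThrough p₁ v₁ ≠ lineThrough p₂ v₂) :
    ∃! q : ℂ, ∀ p v : ℂ, IsConvexSymmAxis U p v → q ∈ lineThrough p v := by
  have hsq : v₁ ^ 2 ≠ v₂ ^ 2 := fun hsq =>
    hdist (h₁.lineThrough_eq_of_sq_eq h₂ hopen hconn hnotstrip hsq)
  have hper : ∀ c, Periodic (· ∈ U) c → c = 0 := fun c hc => by
    have hc₁ := h₁.sq_mul_conj_eq_of_periodic hopen hconn hnotstrip hc
    have hc₂ := h₂.sq_mul_conj_eq_of_periodic hopen hconn hnotstrip hc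
    have : (v₁ ^ 2 - v₂ ^ 2) * conj c = 0 := by linear_combination hc₁ - hc₂
    simpa [sub_ne_zero.mpr hsq] using this
  obtain ⟨q, hq⟩ := exists_reflLine_reflLine_eq_rotation (p₁ := p₁) (p₂ := p₂) h₁.1 hsq
  have hq_mem : ∀ p v, IsConvexSymmAxis U p v → q ∈ lineThrough p v := fun p v h =>
    mem_lineThrough_of_rotation h.1 (fun _ => h.reflLine_mem_iff)
      (by simp [h₁.1, h₂.1]) (sq_mul_conj_sq_ne_one h₁.1 hsq)
      (fun z => by rw [← hq, h₂.reflLine_mem_iff, h₁.reflLine_mem_iff]) hper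
  refine ⟨q, hq_mem, fun y hy => by_contra fun hyq => hdist ?_⟩
  rw [lineThrough_eq_of_mem (hy p₁ v₁ h₁) (hq_mem p₁ v₁ h₁) hyq,
    lineThrough_eq_of_mem (hy p₂ v₂ h₂) (hq_mem p₂ v₂ h₂) hyq]

/-- If a nonempty domain `U ⊆ ℂ` is not `ℂ`, a half-plane or a strip, and has at least
two distinct symmetry axes with respect to each of which it is `Δ`-convex, then there is a
unique point lying on every such axis. -/
theorem convex_symmetry_axes_concurrent (U : Set ℂ) (hne : U.Nonempty)
    (hopen : IsOpen U) (hconn : IsConnected U)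
    (hnotstrip : ¬ ∃ (θ : ℝ) (a b : EReal), a ≠ ⊤ ∧ b ≠ ⊥ ∧
      U = {z : ℂ | a < ((Complex.exp (-(θ : ℂ) * Complex.I) * z).re : EReal) ∧
        ((Complex.exp (-(θ : ℂ) * Complex.I) * z).re : EReal) < b})
    (p₁ v₁ p₂ v₂ : ℂ)
    (h₁ : IsConvexSymmAxis U p₁ v₁) (h₂ : IsConvexSymmAxis U p₂ v₂)
    (hdist : lineThrough p₁ v₁ ≠ lineThrough p₂ v₂) :
    ∃! q : ℂ, ∀ p v : ℂ, IsConvexSymmAxis U p v → q ∈ lineThrough p v :=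
  convex_symmetry_axes_concurrent_general U hopen hconn hnotstrip p₁ v₁ p₂ v₂ h₁ h₂ hdist
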